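/- Let à be an Abelian category, C̃ ⊆ à a thick torsion subcategory, and A ⊆ à a thick full Abelian subcategory such that the composition A ↪ à → Ã/C̃ is essentially surjective. Then with C := C̃ ∩ A, the induced functor A/C → Ã/C̃ is an equivalence of categories. -/

import Mathlib

open CategoryTheory Limits

/-- A thick subcategory of an Abelian category. -/
def IsThick {A : Type*} [Category A] [Abelian A] (C : A → Prop) : Prop :=
  (∃ X, C X) ∧
    ∀ (S : CategoryTheory.ShortComplex A), S.ShortExact →
      ((C S.X₂ → C S.X₁ ∧ C S.X₃) ∧ (C S.X₁ → C S.X₃ → C S.X₂))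

/-- `C` is a torsion subcategory: every object has a maximal subobject in `C`. -/
def IsTorsion {A : Type*} [Category A] [Abelian A] (C : A → Prop) : Prop :=
  ∀ M : A, ∃ t : Subobject M, C ((t : A)) ∧ ∀ s : Subobject M, C ((s : A)) → s ≤ t

/-- The class of morphisms with kernel and cokernel in `C`; the Serre quotient `Ã/C̃` is the
localization of `Ã` at this class, with canonical quotient functor `(serreW C).Q`. -/
def serreW {A : Type*} [Category A] [Abelian A] (C : A → Prop) : MorphismProperty A :=
  fun _ _ f => C (kernel f) ∧ C (cokernel f)

/-- For a thick subcategory `A ⊆ Ã` (given by the predicate `P`) the class of morphisms of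
`A` with kernel and cokernel (computed in `Ã`, equivalently in the thick Abelian subcategory
`A`) lying in `C̃` — since `A` is thick, these kernels and cokernels automatically lie in `A`,
so this is the class of morphisms with kernel and cokernel in `C = C̃ ∩ A`, and the Serre
quotient `A/C` is the localization of `A` at this class. -/
def serreWRes {At : Type*} [Category At] [Abelian At] (Ct : At → Prop) (P : At → Prop) :
    MorphismProperty (ObjectProperty.FullSubcategory P) :=
  fun _ _ f => Ct (kernel f.hom) ∧ Ct (cokernel f.hom)

/-!
Both Serre quotients are computed by left fractions `X ⟶ Y' ⟵ Y`. When `X` and `Y` lie in `A`,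
such a fraction of `Ã` factors through the image of `X ⊞ Y ⟶ Y'`, which lies in `A` since `A` is
closed under extensions and quotients, and which embeds into `Y'`. Hence every fraction, and
every morphism of the localizing class that equalizes two maps in `A`, can be replaced by one
inside `A`: the induced functor is fully faithful, and it is essentially surjective by hypothesis.
-/

section Thick

open ZeroObject

variable {A : Type*} [Category A] [Abelian A] {C : A → Prop}

lemma IsThick.prop_of_mono (hC : IsThick C) {X Y : A} (i : X ⟶ Y) [Mono i] (hY : C Y) : C X :=
  ((hC.2 (ShortComplex.mk i _ (cokernel.condition i))
    ⟨ShortComplex.exact_of_g_is_cokernel _ (cokernelIsCokernel i)⟩).1 hY).1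

lemma IsThick.prop_of_epi (hC : IsThick C) {X Y : A} (p : X ⟶ Y) [Epi p] (hX : C X) : C Y :=
  ((hC.2 (ShortComplex.mk _ p (kernel.condition p))
    ⟨ShortComplex.exact_of_f_is_kernel _ (kernelIsKernel p)⟩).1 hX).2

lemma IsThick.isSerreClass (hC : IsThick C) : ObjectProperty.IsSerreClass C where
  exists_zero := by
    obtain ⟨X, hX⟩ := hC.1
    exact ⟨0, isZero_zero A, hC.prop_of_mono (0 : 0 ⟶ X) hX⟩
  prop_of_mono f _ hY := hC.prop_of_mono f hY
  prop_of_epi f _ hX := hC.prop_of_epi f hX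
  prop_X₂_of_shortExact hS h₁ h₃ := (hC.2 _ hS).2 h₁ h₃

end Thick

namespace CategoryTheory.ObjectProperty

variable {C : Type*} [Category C]

/-- The abelian counterpart of `IsVerdierRightLocalizing`, phrased directly on left fractions. -/
def IsLeftFractionLocalizing (P : ObjectProperty C) (W : MorphismProperty C) : Prop :=
  ∀ ⦃X Y : C⦄, P X → P Y → ∀ φ : W.LeftFraction X Y,
    ∃ (Z : C) (f : X ⟶ Z) (s : Y ⟶ Z) (i : Z ⟶ φ.Y'),
      P Z ∧ W s ∧ Mono i ∧ f ≫ i = φ.f ∧ s ≫ i = φ.s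

namespace IsLeftFractionLocalizing

variable {P : ObjectProperty C} {W : MorphismProperty C} [W.HasLeftCalculusOfFractions]

lemma hasLeftCalculusOfFractions (hP : P.IsLeftFractionLocalizing W) :
    (W.inverseImage P.ι).HasLeftCalculusOfFractions where
  exists_leftFraction X Y φ := by
    obtain ⟨ψ, hψ⟩ := MorphismProperty.HasLeftCalculusOfFractions.exists_leftFraction
      (W := W) { s := φ.s.hom, hs := φ.hs, f := φ.f.hom }
    obtain ⟨Z, f, s, i, hZ, hs, _, hf, hsi⟩ := hP X.2 Y.2 ψ
    refine ⟨.mk (Y' := ⟨Z, hZ⟩) (homMk f) (homMk s) hs, hom_ext _ ?_⟩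
    simp [← cancel_mono i, hsi, hψ, hf]
  ext X' X Y f₁ f₂ s hs hfac := by
    obtain ⟨Z, t, ht, hft⟩ := MorphismProperty.HasLeftCalculusOfFractions.ext
      (W := W) f₁.hom f₂.hom s.hom hs congr($(hfac).hom)
    obtain ⟨Z', _, t', i, hZ', ht', _, -, hti⟩ := hP Y.2 Y.2 ⟨t, t, ht⟩
    refine ⟨⟨Z', hZ'⟩, homMk t', ht', hom_ext _ ?_⟩
    simp [← cancel_mono i, hti, hft]

variable {D₁ D₂ : Type*} [Category D₁] [Category D₂]
  (L₁ : P.FullSubcategory ⥤ D₁) [L₁.IsLocalization (W.inverseImage P.ι)]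
  (L₂ : C ⥤ D₂) [L₂.IsLocalization W] {F : D₁ ⥤ D₂} (e : L₁ ⋙ F ≅ P.ι ⋙ L₂)
include e

lemma faithful (hP : P.IsLeftFractionLocalizing W) : F.Faithful := by
  have := hP.hasLeftCalculusOfFractions
  refine Functor.faithful_of_comp_of_hasLeftCalculusOfFractions L₁ (W.inverseImage P.ι) F
    (fun X Y f g hfg => ?_)
  have hL₂ : (P.ι ⋙ L₂).map f = (P.ι ⋙ L₂).map g := by
    rw [← NatIso.naturality_1 e, ← NatIso.naturality_1 e, Functor.comp_map, Functor.comp_map, hfg]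
  obtain ⟨Z, s, hs, hfs⟩ := (MorphismProperty.map_eq_iff_postcomp L₂ W _ _).1 hL₂
  obtain ⟨Z', -, s', i, hZ', hs', _, -, hsi⟩ := hP Y.2 Y.2 ⟨s, s, hs⟩
  refine (MorphismProperty.map_eq_iff_postcomp L₁ (W.inverseImage P.ι) _ _).2
    ⟨⟨Z', hZ'⟩, homMk s', hs', hom_ext _ ?_⟩
  simpa [← cancel_mono i, hsi] using hfs

lemma full (hP : P.IsLeftFractionLocalizing W) : F.Full := by
  have := hP.hasLeftCalculusOfFractions
  have := Localization.essSurj L₁ (W.inverseImage P.ι)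
  refine F.full_of_comp_essSurj L₁ (fun X Y φ => ?_)
  obtain ⟨ψ, hψ⟩ := Localization.exists_leftFraction L₂ W (e.inv.app X ≫ φ ≫ e.hom.app Y)
  obtain ⟨Z, f, s, i, hZ, hs, _, hf, hsi⟩ := hP X.2 Y.2 ψ
  let ψ' : (W.inverseImage P.ι).LeftFraction X Y :=
    .mk (Y' := ⟨Z, hZ⟩) (homMk f) (homMk s) hs
  have := Localization.inverts L₁ _ _ ψ'.hs
  refine ⟨ψ'.map L₁ (Localization.inverts _ _), ?_⟩
  rw [← cancel_mono (F.map (L₁.map ψ'.s)), ← F.map_comp,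
    MorphismProperty.LeftFraction.map_comp_map_s, ← cancel_mono (e.hom.app _)]
  have : IsIso (L₂.map i) := by
    have := Localization.inverts L₂ W _ hs
    have := Localization.inverts L₂ W _ ψ.hs
    exact IsIso.of_isIso_fac_left (f := L₂.map s) (by rw [← L₂.map_comp, hsi])
  have hL₂f : L₂.map f = ψ.map L₂ (Localization.inverts _ _) ≫ L₂.map s := by
    rw [← cancel_mono (L₂.map i), ← L₂.map_comp, hf, Category.assoc, ← L₂.map_comp, hsi,
      MorphismProperty.LeftFraction.map_comp_map_s]
  have hφ : φ = e.hom.app X ≫ ψ.map L₂ (Localization.inverts _ _) ≫ e.inv.app Y := by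
    simp [← hψ]
  have nf := e.hom.naturality ψ'.f
  have ns := e.hom.naturality ψ'.s
  dsimp at nf ns
  rw [Category.assoc, nf, ns, hφ]
  simp [ψ', hL₂f]

end IsLeftFractionLocalizing

variable {A : Type*} [Category A] [Abelian A]

lemma epiModSerre_of_comp {Ct : ObjectProperty A} [Ct.IsSerreClass] {X Y Z : A}
    (f : X ⟶ Y) (g : Y ⟶ Z) (h : Ct.epiModSerre (f ≫ g)) : Ct.epiModSerre g := by
  let q : cokernel (f ≫ g) ⟶ cokernel g := cokernel.desc _ (cokernel.π g) (by simp)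
  have : Epi q := epi_of_epi_fac (cokernel.π_desc _ _ _)
  exact Ct.prop_of_epi q h

lemma isLeftFractionLocalizing_isoModSerre (Ct P : ObjectProperty A) [Ct.IsSerreClass]
    [P.IsClosedUnderQuotients] [P.IsClosedUnderExtensions] :
    P.IsLeftFractionLocalizing Ct.isoModSerre := by
  intro X Y hX hY φ
  let d : X ⊞ Y ⟶ φ.Y' := biprod.desc φ.f φ.s
  have hd : Ct.epiModSerre d := epiModSerre_of_comp biprod.inr d (by simpa [d] using φ.hs.2)
  have hι : Ct.isoModSerre (Abelian.image.ι d) := hd.isoModSerre_image_ι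
  refine ⟨Abelian.image d, biprod.inl ≫ Abelian.factorThruImage d,
    biprod.inr ≫ Abelian.factorThruImage d, Abelian.image.ι d,
    P.prop_of_epi (Abelian.factorThruImage d) (P.prop_biprod hX hY),
    MorphismProperty.of_postcomp _ _ _ hι ?_, inferInstance, by simp [d], by simp [d]⟩
  simpa [d] using φ.hs

end CategoryTheory.ObjectProperty

theorem second_isomorphism_theorem_general
    {At : Type*} [Category At] [Abelian At] (Ct : At → Prop)
    (hCt : IsThick Ct)
    (P : At → Prop) (hP : IsThick P)
    (hess : (ObjectProperty.ι P ⋙ (serreW Ct).Q).EssSurj)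
    (H : (serreWRes Ct P).Localization ⥤ (serreW Ct).Localization)
    (hH : (serreWRes Ct P).Q ⋙ H = ObjectProperty.ι P ⋙ (serreW Ct).Q) :
    H.IsEquivalence := by
  have := hCt.isSerreClass
  have := hP.isSerreClass
  have : (serreW Ct).HasLeftCalculusOfFractions :=
    inferInstanceAs (ObjectProperty.isoModSerre Ct).HasLeftCalculusOfFractions
  have : (serreWRes Ct P).Q.IsLocalization ((serreW Ct).inverseImage (ObjectProperty.ι P)) :=
    inferInstanceAs ((serreWRes Ct P).Q.IsLocalization (serreWRes Ct P))
  have hloc : ObjectProperty.IsLeftFractionLocalizing P (serreW Ct) :=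
    ObjectProperty.isLeftFractionLocalizing_isoModSerre Ct P
  let e : (serreWRes Ct P).Q ⋙ H ≅ ObjectProperty.ι P ⋙ (serreW Ct).Q := eqToIso hH
  have := hloc.full _ _ e
  have := hloc.faithful _ _ e
  have : ((serreWRes Ct P).Q ⋙ H).EssSurj := Functor.essSurj_of_iso e.symm
  have : H.EssSurj := ⟨fun Y => ⟨_, ⟨((serreWRes Ct P).Q ⋙ H).objObjPreimageIso Y⟩⟩⟩
  exact { }

/-- **second isomorphism theorem.** Let `Ã` be an Abelian category,
`C̃ ⊆ Ã` a thick torsion subcategory, and `A ⊆ Ã` a thick full Abelian subcategory such that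
the composition `A ↪ Ã ⥤ Ã/C̃` is essentially surjective.  Then with `C := C̃ ∩ A`, the
induced functor `A/C ⥤ Ã/C̃` (the unique functor commuting with the quotient functors) is an
equivalence of categories. -/
theorem second_isomorphism_theorem
    {At : Type*} [Category At] [Abelian At] (Ct : At → Prop)
    (hCt : IsThick Ct) (hTor : IsTorsion Ct)
    (P : At → Prop) (hP : IsThick P)
    (hess : (ObjectProperty.ι P ⋙ (serreW Ct).Q).EssSurj)
    (H : (serreWRes Ct P).Localization ⥤ (serreW Ct).Localization)
    (hH : (serreWRes Ct P).Q ⋙ H = ObjectProperty.ι P ⋙ (serreW Ct).Q) :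
    H.IsEquivalence :=
  second_isomorphism_theorem_general Ct hCt P hP hess H hH
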